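/- arXiv:1701.01024 — 2 statements merged into one kernel-verified Lean document; each statement's English description precedes it below -/
import Mathlib

section
/- For every natural number n and real x, the Bernoulli polynomial satisfies B_{n+1}(x) = B_{n+1} + \sum_{k=0}^{n} ((n+1)/(k+1)) * S(n,k) * (x)_{k+1}, where (x)_{k+1} = x(x-1)\cdots(x-k) is the falling factorial and S(n,k) is the Stirling number of the second kind. -/
/-- Stirling numbers of the second kind. -/
def stirling2 : ℕ → ℕ → ℕ
  | 0, 0 => 1
  | 0, _ + 1 => 0
  | _ + 1, 0 => 0
  | n + 1, k + 1 => stirling2 n k + (k + 1) * stirling2 n (k + 1)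

lemma stirling2_eq_zero_of_lt : ∀ n k : ℕ, n < k → stirling2 n k = 0
  | 0, _ + 1, _ => rfl
  | n + 1, k + 1, h => by
      rw [stirling2, stirling2_eq_zero_of_lt n k (by omega),
        stirling2_eq_zero_of_lt n (k + 1) (by omega)]
      ring

lemma descFactorial_mul_aux (j k : ℕ) :
    j.descFactorial (k + 1) + k * j.descFactorial k = j * j.descFactorial k := by
  rcases le_or_gt k j with h | h
  · rw [Nat.descFactorial_succ, ← Nat.add_mul]
    congr 1
    omega
  · rw [Nat.descFactorial_eq_zero_iff_lt.mpr h,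
      Nat.descFactorial_eq_zero_iff_lt.mpr (by omega)]
    simp

lemma pow_eq_sum_stirling2 (n j : ℕ) :
    j ^ n = ∑ k ∈ Finset.range (n + 1), stirling2 n k * j.descFactorial k := by
  induction n with
  | zero => simp [stirling2]
  | succ n ih =>
    have : j ^ (n + 1) = j * j ^ n := by ring
    rw [this, ih, Finset.mul_sum]
    have key : ∀ k, j * (stirling2 n k * j.descFactorial k)
        = stirling2 n k * j.descFactorial (k + 1)
          + k * stirling2 n k * j.descFactorial k := by
      intro k
      rw [mul_left_comm, ← descFactorial_mul_aux j k]
      ring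
    simp_rw [key]
    rw [Finset.sum_add_distrib]
    -- RHS : sum over range (n+2) of stirling2 (n+1) k * (j)_k
    rw [Finset.sum_range_succ' (fun k => stirling2 (n + 1) k * j.descFactorial k) (n + 1)]
    have h0 : stirling2 (n + 1) 0 * j.descFactorial 0 = 0 := by simp [stirling2]
    rw [h0, add_zero]
    have hrec : ∀ k, stirling2 (n + 1) (k + 1) * j.descFactorial (k + 1)
        = stirling2 n k * j.descFactorial (k + 1)
          + (k + 1) * stirling2 n (k + 1) * j.descFactorial (k + 1) := by
      intro k
      rw [stirling2]
      ring
    simp_rw [hrec]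
    rw [Finset.sum_add_distrib]
    congr 1
    -- ∑_{k<n+1} (k+1) * S(n,k+1) * (j)_{k+1} = ∑_{k<n+1} k * S(n,k) * (j)_k
    rw [Finset.sum_range_succ' (fun k => k * stirling2 n k * j.descFactorial k) n,
      Finset.sum_range_succ (fun k => (k + 1) * stirling2 n (k + 1) * j.descFactorial (k + 1)) n,
      stirling2_eq_zero_of_lt n (n + 1) (by omega)]
    simp

lemma descFactorial_hockey (m k : ℕ) :
    (k + 1) * ∑ j ∈ Finset.range m, j.descFactorial k = m.descFactorial (k + 1) := by
  induction m with
  | zero => simp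
  | succ m ih =>
    rw [Finset.sum_range_succ, Nat.mul_add, ih, Nat.succ_descFactorial_succ]
    rcases le_or_gt k m with h | h
    · rw [Nat.descFactorial_succ, ← Nat.add_mul]
      congr 1
      omega
    · rw [Nat.descFactorial_eq_zero_iff_lt.mpr h,
        Nat.descFactorial_eq_zero_iff_lt.mpr (by omega)]
      simp

lemma bernoulli_poly_eq_rat (n : ℕ) :
    Polynomial.bernoulli (n + 1) =
      Polynomial.C ((bernoulli (n + 1) : ℚ)) +
        ∑ k ∈ Finset.range (n + 1),
          Polynomial.C ((((n : ℚ) + 1) / ((k : ℚ) + 1)) * (stirling2 n k : ℚ)) *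
            descPochhammer ℚ (k + 1) := by
  apply Polynomial.eq_of_infinite_eval_eq
  apply Set.Infinite.mono (s := Set.range (Nat.cast : ℕ → ℚ))
  · rintro _ ⟨m, rfl⟩
    simp only [Set.mem_setOf_eq, Polynomial.eval_add, Polynomial.eval_C,
      Polynomial.eval_finset_sum, Polynomial.eval_mul,
      descPochhammer_eval_eq_descFactorial]
    rw [Polynomial.bernoulli_succ_eval]
    congr 1
    have cast_sum : ((∑ j ∈ Finset.range m, (j ^ n : ℕ) : ℕ) : ℚ)
        = ∑ j ∈ Finset.range m, (j : ℚ) ^ n := by push_cast; ring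
    rw [← cast_sum]
    have : (∑ j ∈ Finset.range m, j ^ n)
        = ∑ k ∈ Finset.range (n + 1), stirling2 n k * ∑ j ∈ Finset.range m,
            j.descFactorial k := by
      simp_rw [pow_eq_sum_stirling2 n]
      rw [Finset.sum_comm]
      simp [Finset.mul_sum]
    rw [this]
    push_cast
    rw [Finset.mul_sum]
    apply Finset.sum_congr rfl
    intro k _
    have hk : ((k : ℚ) + 1) ≠ 0 := by positivity
    have hh : ((m.descFactorial (k + 1) : ℕ) : ℚ)
        = ((k : ℚ) + 1) * ∑ j ∈ Finset.range m, (j.descFactorial k : ℚ) := by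
      rw [← descFactorial_hockey m k]; push_cast; ring
    rw [hh]
    field_simp
  · exact Set.infinite_range_of_injective Nat.cast_injective

theorem bernoulliPoly_eq_bernoulli_add_sum_stirling_descFactorial (n : ℕ) (x : ℝ) :
    (Polynomial.aeval x) (Polynomial.bernoulli (n + 1)) =
      ((bernoulli (n + 1) : ℚ) : ℝ) +
        ∑ k ∈ Finset.range (n + 1),
          (((n : ℝ) + 1) / ((k : ℝ) + 1)) * (stirling2 n k : ℝ) *
            (descPochhammer ℝ (k + 1)).eval x := by
  rw [bernoulli_poly_eq_rat n]
  have h1 : ∀ k : ℕ, (Polynomial.aeval x) (descPochhammer ℚ (k + 1))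
      = (descPochhammer ℝ (k + 1)).eval x := by
    intro k
    rw [Polynomial.aeval_def, ← Polynomial.eval_map, descPochhammer_map (algebraMap ℚ ℝ)]
  simp only [map_add, map_sum, map_mul, Polynomial.aeval_C]
  simp_rw [h1]
  norm_num [Algebra.algebraMap_eq_smul_one, Rat.smul_one_eq_cast]
end

section
/- For |x| < 1 (real x) and every natural number n, \sum_{k=1}^{\infty} \zeta(k+1) (k+1)^n x^k = -(\psi(1-x) + \gamma) + \sum_{k=1}^{n} S(n+1,k+1) * k! * \zeta(k+1, 1-x) * x^k, where \psi is the digamma function, \gamma is Euler's constant, \zeta(s) the Riemann zeta function, and \zeta(s,a) the Hurwitz zeta function. -/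
/-- The Riemann zeta function at a natural number argument, `ζ(s) = ∑_{m≥1} 1/m^s`. -/
noncomputable def zetaNat (s : ℕ) : ℝ := ∑' m : ℕ, 1 / ((m : ℝ) + 1) ^ s

/-- The Hurwitz zeta function at a natural number argument, `ζ(s,a) = ∑_{m≥0} (m+a)^{-s}`. -/
noncomputable def hurwitzZetaNat (s : ℕ) (a : ℝ) : ℝ := ∑' m : ℕ, 1 / ((m : ℝ) + a) ^ s

/-- The digamma function `ψ = Γ'/Γ`. -/
noncomputable def digamma (x : ℝ) : ℝ := deriv Real.Gamma x / Real.Gamma x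

open Finset Nat Real Filter Topology

local notation "γ" => eulerMascheroniConstant

theorem stirling2_eq_stirlingSecond : ∀ n k : ℕ, stirling2 n k = stirlingSecond n k
  | 0, 0 | 0, _ + 1 | _ + 1, 0 => rfl
  | n + 1, k + 1 => by
    rw [stirling2, stirlingSecond_succ_succ, stirling2_eq_stirlingSecond n k,
      stirling2_eq_stirlingSecond n (k + 1), add_comm]

theorem add_one_pow_eq_sum_stirlingSecond_mul_choose (n j : ℕ) :
    (j + 1) ^ n = ∑ k ∈ range (n + 1), stirlingSecond (n + 1) (k + 1) * (k ! * j.choose k) := by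
  induction n with
  | zero => simp [stirlingSecond_self]
  | succ n ih =>
    have hsplit (s k : ℕ) : (j + 1) * (s * (k ! * j.choose k)) =
        (k + 1) * s * (k ! * j.choose k) + s * ((k + 1)! * j.choose (k + 1)) := by
      rw [mul_left_comm, mul_left_comm _ k !, Nat.add_one_mul_choose_eq, Nat.choose_succ_succ,
        factorial_succ]
      ring
    have hrec (k : ℕ) : stirlingSecond (n + 2) (k + 1) * (k ! * j.choose k) =
        (k + 1) * stirlingSecond (n + 1) (k + 1) * (k ! * j.choose k) +
          stirlingSecond (n + 1) k * (k ! * j.choose k) := by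
      rw [stirlingSecond_succ_succ, add_mul]
    rw [_root_.pow_succ', ih, mul_sum]
    simp only [hsplit, hrec, sum_add_distrib]
    rw [sum_range_succ _ (n + 1), sum_range_succ' _ (n + 1),
      stirlingSecond_eq_zero_of_lt (lt_add_one (n + 1)), stirlingSecond_succ_zero]
    simp

section GeneratingFunction

variable {𝕜 : Type*} [NormedField 𝕜]

theorem hasSum_choose_mul_geometric (k : ℕ) {t : 𝕜} (ht : ‖t‖ < 1) :
    HasSum (fun j : ℕ ↦ (j.choose k : 𝕜) * t ^ j) (t ^ k / (1 - t) ^ (k + 1)) := by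
  rw [← hasSum_nat_add_iff' k]
  have hlow : ∑ j ∈ range k, (j.choose k : 𝕜) * t ^ j = 0 :=
    sum_eq_zero fun j hj ↦ by rw [choose_eq_zero_of_lt (mem_range.mp hj), cast_zero, zero_mul]
  rw [hlow, sub_zero, ← mul_one_div]
  refine ((hasSum_choose_mul_geometric_of_norm_lt_one k ht).mul_left (t ^ k)).congr_fun fun j ↦ ?_
  rw [pow_add]
  ring

theorem hasSum_add_one_pow_mul_geometric (n : ℕ) {t : 𝕜} (ht : ‖t‖ < 1) :
    HasSum (fun j : ℕ ↦ ((j : 𝕜) + 1) ^ n * t ^ j)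
      (∑ k ∈ range (n + 1),
        (stirlingSecond (n + 1) (k + 1) * k ! : 𝕜) * (t ^ k / (1 - t) ^ (k + 1))) := by
  refine (hasSum_sum fun k _ ↦ (hasSum_choose_mul_geometric k ht).mul_left
    (stirlingSecond (n + 1) (k + 1) * k ! : 𝕜)).congr_fun fun j ↦ ?_
  have h := congrArg (fun m : ℕ ↦ (m : 𝕜) * t ^ j)
    (add_one_pow_eq_sum_stirlingSecond_mul_choose n j)
  push_cast [sum_mul] at h
  rw [h]
  exact sum_congr rfl fun k _ ↦ by ring

theorem hasSum_add_two_pow_mul_pow_div_pow (n : ℕ) {x a : 𝕜} (hxa : ‖x‖ < ‖a‖) :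
    HasSum (fun k : ℕ ↦ ((k : 𝕜) + 2) ^ n * x ^ (k + 1) * (1 / a ^ (k + 2)))
      (1 / (a - x) - 1 / a +
        ∑ k ∈ Icc 1 n, (stirlingSecond (n + 1) (k + 1) * k ! : 𝕜) * x ^ k / (a - x) ^ (k + 1)) := by
  have ha : a ≠ 0 := norm_pos_iff.mp ((norm_nonneg x).trans_lt hxa)
  have hax : a - x ≠ 0 := fun h ↦ hxa.ne (by rw [sub_eq_zero.mp h])
  have ht : ‖x / a‖ < 1 := by rwa [norm_div, div_lt_one ((norm_nonneg x).trans_lt hxa)]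
  have hterm (c : 𝕜) (k : ℕ) :
      1 / a * (c * ((x / a) ^ k / (1 - x / a) ^ (k + 1))) = c * x ^ k / (a - x) ^ (k + 1) := by
    rw [one_sub_div ha, div_pow, div_pow, div_div_div_eq, pow_succ a k]
    field_simp
  -- substitute `t = x / a`, drop the term `j = 0` (it is `1 / a`) and split off `k = 0`
  have h := (hasSum_nat_add_iff' 1).mpr ((hasSum_add_one_pow_mul_geometric n ht).mul_left (1 / a))
  rw [range_eq_Ico, sum_eq_sum_Ico_succ_bot (by lia : 0 < n + 1), zero_add,
    Ico_add_one_right_eq_Icc, mul_add, mul_sum] at h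
  simp only [hterm, stirlingSecond_one_right, sum_range_one] at h
  simp only [Nat.cast_one, factorial_zero, Nat.cast_zero, pow_zero, zero_add, pow_one, one_pow,
    mul_one, add_sub_right_comm] at h
  refine h.congr_fun fun k ↦ ?_
  push_cast
  rw [div_pow]
  field_simp
  ring

end GeneratingFunction

theorem summable_one_div_nat_add_pow (a : ℝ) {s : ℕ} (hs : 2 ≤ s) :
    Summable fun m : ℕ ↦ 1 / ((m : ℝ) + a) ^ s := by
  refine summable_abs_iff.mp (((summable_one_div_nat_add_rpow a s).mpr
    (by exact_mod_cast hs)).congr fun m ↦ ?_)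
  rw [abs_div, abs_one, abs_pow, rpow_natCast]

theorem hasSum_hurwitzZetaNat (a : ℝ) {s : ℕ} (hs : 2 ≤ s) :
    HasSum (fun m : ℕ ↦ 1 / ((m : ℝ) + a) ^ s) (hurwitzZetaNat s a) :=
  (summable_one_div_nat_add_pow a hs).hasSum

theorem zetaNat_eq_hurwitzZetaNat_one (s : ℕ) : zetaNat s = hurwitzZetaNat s 1 := rfl

theorem summable_one_div_add_one_sub_one_div_add {y : ℝ} (hy : 0 < y) :
    Summable fun m : ℕ ↦ 1 / ((m : ℝ) + 1) - 1 / ((m : ℝ) + y) := by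
  have hdom := ((summable_one_div_nat_add_pow 1 le_rfl).add
    (summable_one_div_nat_add_pow y le_rfl)).mul_left |y - 1|
  refine hdom.of_norm_bounded fun m ↦ ?_
  have h1 : (0 : ℝ) < m + 1 := by positivity
  have hy' : (0 : ℝ) < m + y := by positivity
  have hfactor : 1 / ((m : ℝ) + 1) - 1 / ((m : ℝ) + y) =
      (y - 1) * (1 / ((m : ℝ) + 1) * (1 / ((m : ℝ) + y))) := by
    field_simp
    ring
  rw [hfactor, norm_mul, Real.norm_eq_abs, Real.norm_of_nonneg (by positivity), ← one_div_pow,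
    ← one_div_pow]
  gcongr
  linarith [two_mul_le_add_sq (1 / ((m : ℝ) + 1)) (1 / ((m : ℝ) + y)),
    mul_pos (one_div_pos.mpr h1) (one_div_pos.mpr hy')]

theorem ne_neg_natCast_of_pos {y : ℝ} (hy : 0 < y) (m : ℕ) : y ≠ -m := by
  linarith [(m.cast_nonneg : (0 : ℝ) ≤ m)]

theorem digamma_add_one {y : ℝ} (hy : ∀ m : ℕ, y ≠ -m) : digamma (y + 1) = digamma y + 1 / y := by
  have hy0 : y ≠ 0 := by simpa using hy 0
  have hderiv : deriv Gamma (y + 1) = Gamma y + y * deriv Gamma y := by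
    have hshift : (fun z ↦ Gamma (z + 1)) =ᶠ[𝓝 y] fun z ↦ z * Gamma z := by
      filter_upwards [isOpen_ne.mem_nhds hy0] with z hz using Gamma_add_one hz
    rw [← deriv_comp_add_const, hshift.deriv_eq,
      ((hasDerivAt_id' y).fun_mul (differentiableAt_Gamma hy).hasDerivAt).deriv, one_mul]
  rw [digamma, digamma, hderiv, Gamma_add_one hy0]
  field_simp [Gamma_ne_zero hy]
  ring

theorem digamma_nat_add_one (N : ℕ) : digamma (N + 1) = -γ + harmonic N := by
  rw [digamma, deriv_Gamma_nat, Gamma_nat_eq_factorial]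
  field_simp

theorem digamma_eq_deriv_log_Gamma {y : ℝ} (hy : 0 < y) :
    digamma y = deriv (Real.log ∘ Gamma) y :=
  (deriv.log (differentiableAt_Gamma (ne_neg_natCast_of_pos hy)) (Gamma_pos_of_pos hy).ne').symm

theorem monotoneOn_digamma : MonotoneOn digamma (Set.Ioi 0) := by
  refine (convexOn_log_Gamma.monotoneOn_deriv fun y hy ↦ ?_).congr fun y hy ↦
    (digamma_eq_deriv_log_Gamma hy).symm
  exact (differentiableAt_Gamma (ne_neg_natCast_of_pos hy)).log (Gamma_pos_of_pos hy).ne'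

theorem digamma_nat_add {y : ℝ} (hy : 0 < y) (k : ℕ) :
    digamma (k + y) = digamma y + ∑ i ∈ range k, 1 / ((i : ℝ) + y) := by
  induction k with
  | zero => simp
  | succ k ih =>
    rw [cast_succ, add_right_comm, digamma_add_one (ne_neg_natCast_of_pos (by positivity)), ih,
      sum_range_succ, add_assoc]

theorem tendsto_one_div_add_atTop_nhds_zero {f : ℕ → ℝ} (hf : Tendsto f atTop atTop) (c : ℝ) :
    Tendsto (fun N ↦ 1 / (c + f N)) atTop (𝓝 0) :=
  tendsto_const_nhds.div_atTop (tendsto_atTop_add_const_left _ c hf)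

theorem tendsto_digamma_nat_add_sub_digamma_nat_add_one {y : ℝ} (hy : 0 < y) :
    Tendsto (fun N : ℕ ↦ digamma (N + y) - digamma (N + 1)) atTop (𝓝 0) := by
  have hlower (N : ℕ) : -(1 / (y + N)) ≤ digamma (N + y) - digamma (N + 1) := by
    have := monotoneOn_digamma (a := (N : ℝ) + 1) (b := N + y + 1) (Set.mem_Ioi.mpr (by positivity))
      (Set.mem_Ioi.mpr (by positivity)) (by linarith)
    rw [digamma_add_one (y := N + y) (ne_neg_natCast_of_pos (by positivity))] at this
    rw [add_comm y]
    linarith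
  have hupper (N : ℕ) : digamma (N + y) - digamma (N + 1) ≤
      ∑ i ∈ range ⌈y⌉₊, 1 / ((i : ℝ) + (N + 1)) := by
    have := monotoneOn_digamma (a := (N : ℝ) + y) (b := ⌈y⌉₊ + (N + 1))
      (Set.mem_Ioi.mpr (by positivity)) (Set.mem_Ioi.mpr (by positivity)) (by linarith [le_ceil y])
    rw [digamma_nat_add (y := N + 1) (by positivity)] at this
    linarith
  have htail := tendsto_natCast_atTop_atTop (R := ℝ)
  refine tendsto_of_tendsto_of_tendsto_of_le_of_le ?_ ?_ hlower hupper
  · simpa using (tendsto_one_div_add_atTop_nhds_zero htail y).neg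
  · have := tendsto_finsetSum (range ⌈y⌉₊) fun i _ ↦
      tendsto_one_div_add_atTop_nhds_zero (tendsto_atTop_add_const_right _ 1 htail) (i : ℝ)
    rwa [sum_const_zero] at this

theorem hasSum_one_div_add_one_sub_one_div_add {y : ℝ} (hy : 0 < y) :
    HasSum (fun m : ℕ ↦ 1 / ((m : ℝ) + 1) - 1 / ((m : ℝ) + y)) (digamma y + γ) := by
  have hs := (summable_one_div_add_one_sub_one_div_add hy).hasSum
  have hpartial (N : ℕ) : ∑ m ∈ range N, (1 / ((m : ℝ) + 1) - 1 / ((m : ℝ) + y)) =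
      digamma y + γ - (digamma (N + y) - digamma (N + 1)) := by
    rw [sum_sub_distrib, digamma_nat_add_one, digamma_nat_add hy, harmonic]
    push_cast [one_div]
    ring
  convert hs
  refine tendsto_nhds_unique ?_ hs.tendsto_sum_nat
  simp_rw [hpartial]
  simpa using (tendsto_digamma_nat_add_sub_digamma_nat_add_one hy).const_sub (digamma y + γ)

theorem summable_add_two_pow_mul_pow_mul_one_div_pow (n : ℕ) {x : ℝ} (hx : |x| < 1) :
    Summable fun p : ℕ × ℕ ↦
      ((p.1 : ℝ) + 2) ^ n * x ^ (p.1 + 1) * (1 / ((p.2 : ℝ) + 1) ^ (p.1 + 2)) := by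
  have hrow : Summable fun k : ℕ ↦ ((k : ℝ) + 2) ^ n * |x| ^ (k + 1) := by
    have h := (hasSum_add_one_pow_mul_geometric n (t := |x|) (by rwa [norm_abs_eq_norm])).summable
    refine ((summable_nat_add_iff 1).mpr h).congr fun k ↦ ?_
    push_cast
    ring
  have hcol := summable_one_div_nat_add_pow 1 le_rfl
  refine (hrow.mul_of_nonneg hcol (fun k ↦ by positivity) fun m ↦ by positivity).of_norm_bounded
    fun ⟨k, m⟩ ↦ ?_
  dsimp only
  rw [norm_mul, norm_mul, norm_pow, norm_pow, Real.norm_of_nonneg (by positivity : (0 : ℝ) ≤ k + 2),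
    Real.norm_of_nonneg (by positivity : (0 : ℝ) ≤ 1 / ((m : ℝ) + 1) ^ (k + 2)), Real.norm_eq_abs]
  gcongr
  · simp
  · omega

theorem Summable.hasSum_fiberwise_of_swap {α ι κ : Type*} [AddCommMonoid α] [TopologicalSpace α]
    [ContinuousAdd α] [RegularSpace α] [T2Space α] {F : ι × κ → α} (hF : Summable F)
    {a : ι → α} {b : κ → α} {s : α} (ha : ∀ i, HasSum (fun j ↦ F (i, j)) (a i))
    (hb : ∀ j, HasSum (fun i ↦ F (i, j)) (b j)) (hs : HasSum b s) : HasSum a s := by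
  have htotal : ∑' p, F p = s :=
    (((Equiv.prodComm κ ι).hasSum_iff.mpr hF.hasSum).prod_fiberwise hb).unique hs
  exact htotal ▸ hF.hasSum.prod_fiberwise ha

theorem hasSum_digamma_add_sum_hurwitzZetaNat (n : ℕ) {x : ℝ} (hx : x < 1) :
    HasSum (fun m : ℕ ↦ 1 / ((m : ℝ) + 1 - x) - 1 / ((m : ℝ) + 1) + ∑ k ∈ Icc 1 n,
        (stirlingSecond (n + 1) (k + 1) * k ! : ℝ) * x ^ k / ((m : ℝ) + 1 - x) ^ (k + 1))
      (-(digamma (1 - x) + γ) + ∑ k ∈ Icc 1 n,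
        (stirlingSecond (n + 1) (k + 1) * k ! : ℝ) * hurwitzZetaNat (k + 1) (1 - x) * x ^ k) := by
  have hfinite := hasSum_sum fun k (hk : k ∈ Icc 1 n) ↦
    ((hasSum_hurwitzZetaNat (1 - x) (by linarith [(mem_Icc.mp hk).1] : 2 ≤ k + 1)).mul_left
      (stirlingSecond (n + 1) (k + 1) * k ! : ℝ)).mul_right (x ^ k)
  refine ((hasSum_one_div_add_one_sub_one_div_add (sub_pos.mpr hx)).neg.add hfinite).congr_fun
    fun m ↦ ?_
  simp only [neg_sub, ← add_sub_assoc]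
  congr 1
  exact sum_congr rfl fun k _ ↦ by ring

theorem sum_zeta_mul_pow_mul_pow (n : ℕ) (x : ℝ) (hx : |x| < 1) :
    HasSum (fun k : ℕ => zetaNat (k + 2) * ((k : ℝ) + 2) ^ n * x ^ (k + 1))
      (-(digamma (1 - x) + Real.eulerMascheroniConstant) +
        ∑ k ∈ Finset.Icc 1 n,
          (stirling2 (n + 1) (k + 1) : ℝ) * (Nat.factorial k : ℝ) *
            hurwitzZetaNat (k + 1) (1 - x) * x ^ k) := by
  have hxa (m : ℕ) : ‖x‖ < ‖(m : ℝ) + 1‖ := by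
    rw [Real.norm_eq_abs, Real.norm_of_nonneg (by positivity)]
    linarith [(m.cast_nonneg : (0 : ℝ) ≤ m)]
  have hcol (k : ℕ) : HasSum
      (fun m : ℕ ↦ ((k : ℝ) + 2) ^ n * x ^ (k + 1) * (1 / ((m : ℝ) + 1) ^ (k + 2)))
      (zetaNat (k + 2) * ((k : ℝ) + 2) ^ n * x ^ (k + 1)) := by
    have h := (hasSum_hurwitzZetaNat 1 (le_add_self : 2 ≤ k + 2)).mul_left
      (((k : ℝ) + 2) ^ n * x ^ (k + 1))
    rwa [← zetaNat_eq_hurwitzZetaNat_one, mul_comm _ (zetaNat _), ← mul_assoc] at h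
  have hrow (m : ℕ) : HasSum
      (fun k : ℕ ↦ ((k : ℝ) + 2) ^ n * x ^ (k + 1) * (1 / ((m : ℝ) + 1) ^ (k + 2)))
      (1 / ((m : ℝ) + 1 - x) - 1 / ((m : ℝ) + 1) + ∑ k ∈ Icc 1 n,
        (stirlingSecond (n + 1) (k + 1) * k ! : ℝ) * x ^ k / ((m : ℝ) + 1 - x) ^ (k + 1)) :=
    hasSum_add_two_pow_mul_pow_div_pow n (hxa m)
  simp only [stirling2_eq_stirlingSecond]
  exact (summable_add_two_pow_mul_pow_mul_one_div_pow n hx).hasSum_fiberwise_of_swap hcol hrow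
    (hasSum_digamma_add_sum_hurwitzZetaNat n (lt_of_abs_lt hx))
end
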